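/- Orthogonal decomposition of the ambient space at a manifold point: if (x1, x2, x3) ∈ M with d > 0, then the span of N1 = X·U_1^0 and N2 = X·U_0^1 is exactly the orthogonal complement in (ℝ³)³ of the subspace T = {ξ : E1(ξ) = 0 and E2(ξ) = 0}; equivalently, every triple Z ∈ (ℝ³)³ decomposes uniquely as Z = ξ + η with ξ ∈ T, η ∈ span{N1, N2}, and ⟨ξ, η⟩ = 0. -/

import Mathlib

open RealInnerProductSpace

/-- The space of triples of vectors of `ℝ³`, with the inner product
`⟨ξ, η⟩ = ⟪ξ1, η1⟫ + ⟪ξ2, η2⟫ + ⟪ξ3, η3⟫`. -/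
abbrev TripleSpace : Type :=
  PiLp 2 (fun _ : Fin 3 => EuclideanSpace ℝ (Fin 3))

/-- Build a triple from its three components. -/
noncomputable def mkTriple (a b c : EuclideanSpace ℝ (Fin 3)) : TripleSpace :=
  (WithLp.equiv 2 _).symm ![a, b, c]

/-- The triple `X·U_α^β = (η1, η2, η3)` from the paper. -/
noncomputable def XU (x1 x2 x3 : EuclideanSpace ℝ (Fin 3)) (α β : ℝ) : TripleSpace :=
  mkTriple ((α + β) • (x2 - x3))
    ((α + β) • x1 - (2 * α) • x2 + (α - β) • x3)
    (-((α + β) • x1) + (α - β) • x2 + (2 * β) • x3)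

/-!
The constraint functionals are inner products with the normal triples:
`⟨X·U_α^β, ξ⟩ = α E1(ξ) + β E2(ξ)`, so `T = span{N1, N2}ᗮ`. Since `span{N1, N2}` is
finite-dimensional, it is its own double orthogonal complement and, together with `T`,
splits the space orthogonally.
-/

namespace Submodule

variable {𝕜 E : Type*} [RCLike 𝕜] [NormedAddCommGroup E] [InnerProductSpace 𝕜 E]

theorem mem_orthogonal_span_pair_iff {a b v : E} :
    v ∈ (span 𝕜 {a, b})ᗮ ↔ inner 𝕜 a v = 0 ∧ inner 𝕜 b v = 0 := by
  rw [span_insert, ← inf_orthogonal, mem_inf, mem_orthogonal_singleton_iff_inner_right,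
    mem_orthogonal_singleton_iff_inner_right]

theorem existsUnique_add_orthogonal (K : Submodule 𝕜 E) [K.HasOrthogonalProjection] (z : E) :
    ∃! p : E × E, p.1 ∈ Kᗮ ∧ p.2 ∈ K ∧ inner 𝕜 p.1 p.2 = 0 ∧ z = p.1 + p.2 := by
  obtain ⟨u, v, huv, huniq⟩ := existsUnique_add_of_isCompl K.isCompl_orthogonal.symm z
  refine ⟨(u, v), ⟨u.2, v.2, inner_left_of_mem_orthogonal v.2 u.2, huv.symm⟩, ?_⟩
  rintro ⟨r, s⟩ ⟨hr, hs, -, rfl⟩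
  obtain ⟨hru, hsv⟩ := huniq ⟨r, hr⟩ ⟨s, hs⟩ rfl
  simp [← hru, ← hsv]

end Submodule

theorem inner_mkTriple (a b c : EuclideanSpace ℝ (Fin 3)) (ξ : TripleSpace) :
    ⟪mkTriple a b c, ξ⟫ = ⟪a, ξ 0⟫ + ⟪b, ξ 1⟫ + ⟪c, ξ 2⟫ := by
  rw [PiLp.inner_apply, Fin.sum_univ_three]
  rfl

theorem inner_XU (x1 x2 x3 : EuclideanSpace ℝ (Fin 3)) (α β : ℝ) (ξ : TripleSpace) :
    ⟪XU x1 x2 x3 α β, ξ⟫ =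
      α * (⟪ξ 0 - ξ 1, x2 - x3⟫ + ⟪x1 - x2, ξ 1 - ξ 2⟫) +
        β * (⟪ξ 0 - ξ 2, x2 - x3⟫ + ⟪x1 - x3, ξ 1 - ξ 2⟫) := by
  simp only [XU, inner_mkTriple, inner_sub_left, inner_sub_right, inner_add_left,
    inner_neg_left, real_inner_smul_left, real_inner_comm x2, real_inner_comm x3]
  ring

theorem orthogonal_decomposition_general
    (x1 x2 x3 : EuclideanSpace ℝ (Fin 3)) :
    ∃ T : Submodule ℝ TripleSpace,
      (∀ ξ : TripleSpace,
        ξ ∈ T ↔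
          ⟪ξ 0 - ξ 1, x2 - x3⟫ + ⟪x1 - x2, ξ 1 - ξ 2⟫ = 0 ∧
          ⟪ξ 0 - ξ 2, x2 - x3⟫ + ⟪x1 - x3, ξ 1 - ξ 2⟫ = 0) ∧
      Submodule.span ℝ {XU x1 x2 x3 1 0, XU x1 x2 x3 0 1} = Tᗮ ∧
      (∀ Z : TripleSpace, ∃! p : TripleSpace × TripleSpace,
        p.1 ∈ T ∧ p.2 ∈ Submodule.span ℝ {XU x1 x2 x3 1 0, XU x1 x2 x3 0 1} ∧
        ⟪p.1, p.2⟫ = 0 ∧ Z = p.1 + p.2) := by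
  set K := Submodule.span ℝ {XU x1 x2 x3 1 0, XU x1 x2 x3 0 1}
  refine ⟨Kᗮ, fun ξ => ?_, K.orthogonal_orthogonal.symm, K.existsUnique_add_orthogonal⟩
  rw [Submodule.mem_orthogonal_span_pair_iff, inner_XU, inner_XU]
  simp

/-- Orthogonal decomposition of the ambient space at a manifold point:
if `(x1, x2, x3) ∈ M` with `d > 0`, then the span of `N1 = X·U_1^0` and `N2 = X·U_0^1`
is exactly the orthogonal complement of the tangent subspace
`T = {ξ : E1(ξ) = 0 ∧ E2(ξ) = 0}`; equivalently, every triple `Z` decomposes uniquely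
as `Z = ξ + η` with `ξ ∈ T`, `η ∈ span{N1, N2}`, and `⟨ξ, η⟩ = 0`. -/
theorem orthogonal_decomposition (d : ℝ) (hd : 0 < d)
    (x1 x2 x3 : EuclideanSpace ℝ (Fin 3))
    (h1 : ⟪x1 - x2, x2 - x3⟫ = -d ^ 2 / 2)
    (h2 : ⟪x1 - x3, x2 - x3⟫ = d ^ 2 / 2) :
    ∃ T : Submodule ℝ TripleSpace,
      (∀ ξ : TripleSpace,
        ξ ∈ T ↔
          ⟪ξ 0 - ξ 1, x2 - x3⟫ + ⟪x1 - x2, ξ 1 - ξ 2⟫ = 0 ∧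
          ⟪ξ 0 - ξ 2, x2 - x3⟫ + ⟪x1 - x3, ξ 1 - ξ 2⟫ = 0) ∧
      Submodule.span ℝ {XU x1 x2 x3 1 0, XU x1 x2 x3 0 1} = Tᗮ ∧
      (∀ Z : TripleSpace, ∃! p : TripleSpace × TripleSpace,
        p.1 ∈ T ∧ p.2 ∈ Submodule.span ℝ {XU x1 x2 x3 1 0, XU x1 x2 x3 0 1} ∧
        ⟪p.1, p.2⟫ = 0 ∧ Z = p.1 + p.2) :=
  orthogonal_decomposition_general x1 x2 x3
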